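/- arXiv:2010.05242 — 3 statements merged into one kernel-verified Lean document; each statement's English description precedes it below -/
import Mathlib

section
/- Let L be a directed partially ordered commutative monoid and M an L-filtered abelian group. Then the filtered abelian group Ŵ M = lim_{λ ∈ L^op} (M / F^λ M), equipped with the filtration F^l Ŵ M = lim_{λ ∈ L^op} ((F^l M + F^λ M)/F^λ M), is complete: every Cauchy net in Ŵ M converges. -/
/-- For a directed partially ordered set `L` and an `L`-filtered abelian
group `M`, the completion `Ŵ M = lim_{λ ∈ L^op} M/F^λ M` (described here by compatible
families of representatives `y : L → M` with `y a - y b ∈ F^a` for `a ≤ b`, with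
filtration `F^l Ŵ M` consisting of families with `y λ ∈ F^l + F^λ`) is complete:
every Cauchy net converges. -/
theorem stmt5 (L : Type*) [PartialOrder L]
    (hdirL : ∀ a b : L, ∃ c, a ≤ c ∧ b ≤ c)
    (M : Type*) [AddCommGroup M] (F : L → AddSubgroup M)
    (hF : ∀ {a b : L}, a ≤ b → F b ≤ F a)
    (D : Type*) [Preorder D] [Nonempty D]
    (hD : ∀ d e : D, ∃ c, d ≤ c ∧ e ≤ c)
    (x : D → L → M)
    (hcompat : ∀ d : D, ∀ {a b : L}, a ≤ b → x d a - x d b ∈ F a)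
    (hcauchy : ∀ l : L, ∃ N : D, ∀ n m : D, N ≤ n → N ≤ m →
      ∀ lam : L, x n lam - x m lam ∈ F l ⊔ F lam) :
    ∃ y : L → M, (∀ {a b : L}, a ≤ b → y a - y b ∈ F a) ∧
      ∀ l : L, ∃ N : D, ∀ n : D, N ≤ n →
        ∀ lam : L, x n lam - y lam ∈ F l ⊔ F lam := by
  classical
  choose Nf hNf using hcauchy
  refine ⟨fun l => x (Nf l) l, ?_, ?_⟩
  · intro a b hab
    obtain ⟨c, hca, hcb⟩ := hD (Nf a) (Nf b)
    have h1 : x (Nf a) a - x (Nf a) b ∈ F a := hcompat _ hab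
    have hba : F b ≤ F a := hF hab
    have h2 : x (Nf a) b - x c b ∈ F a := by
      have := hNf a (Nf a) c le_rfl hca b
      rwa [sup_eq_left.mpr hba] at this
    have h3 : x c b - x (Nf b) b ∈ F a := by
      have := hNf b c (Nf b) hcb le_rfl b
      rw [sup_idem] at this
      exact hba this
    have h23 : x (Nf a) b - x (Nf b) b ∈ F a := by
      have := add_mem h2 h3
      rwa [sub_add_sub_cancel] at this
    have := add_mem h1 h23
    rwa [sub_add_sub_cancel] at this
  · intro l
    refine ⟨Nf l, fun n hn lam => ?_⟩
    obtain ⟨c, hcn, hcl⟩ := hD n (Nf lam)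
    obtain ⟨c', hc1, hc2⟩ := hD c (Nf l)
    have h1 : x n lam - x c' lam ∈ F l ⊔ F lam := hNf l n c' hn hc2 lam
    have h2 : x c' lam - x (Nf lam) lam ∈ F l ⊔ F lam := by
      have := hNf lam c' (Nf lam) (le_trans hcl hc1) le_rfl lam
      rw [sup_idem] at this
      exact le_sup_right (α := AddSubgroup M) this
    have := add_mem h1 h2
    rwa [sub_add_sub_cancel] at this
end

section
/- Let F₁, …, Fₙ be Cauchy filters on L-filtered abelian groups M₁, …, Mₙ. Then the filter F on M₁ ⊗ ⋯ ⊗ Mₙ generated by the sets A₁ ⊗ ⋯ ⊗ Aₙ = {x₁ ⊗ ⋯ ⊗ xₙ | xᵢ ∈ Aᵢ}, with Aᵢ ∈ Fᵢ, is a Cauchy filter with respect to the filtration F^l(⊗ᵢ Mᵢ) = image of ⊕_{l₁+⋯+lₙ = l} ⊗ᵢ F^{lᵢ}Mᵢ. -/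
open scoped TensorProduct

/-- The filtration on a tensor product of `L`-filtered abelian groups:
`F^l(⊗ᵢ Mᵢ)` is generated by pure tensors of elements `xᵢ ∈ F^{lᵢ} Mᵢ` with
`l ≤ l₁ + ⋯ + lₙ`. -/
noncomputable def tensorFil {ι : Type*} [Fintype ι] (L : Type*) [AddCommMonoid L] [PartialOrder L]
    (M : ι → Type*) [∀ i, AddCommGroup (M i)]
    (F : ∀ i, L → AddSubgroup (M i)) (l : L) : AddSubgroup (⨂[ℤ] i, M i) :=
  AddSubgroup.closure {t | ∃ (lv : ι → L) (x : ∀ i, M i),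
    l ≤ ∑ i, lv i ∧ (∀ i, x i ∈ F i (lv i)) ∧ t = PiTensorProduct.tprod ℤ x}

/-- If `F₁, …, Fₙ` are Cauchy filters on `L`-filtered abelian groups
`M₁, …, Mₙ`, then the filter on `M₁ ⊗ ⋯ ⊗ Mₙ` generated by the setwise tensor products
`A₁ ⊗ ⋯ ⊗ Aₙ` (with `Aᵢ ∈ Fᵢ`) is a Cauchy filter for the tensor-product filtration. -/
theorem stmt9 (L : Type*) [AddCommMonoid L] [PartialOrder L] [IsOrderedAddMonoid L]
    (hdir : ∀ a b : L, ∃ c, a ≤ c ∧ b ≤ c)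
    (hdirop : ∀ a b : L, ∃ c, c ≤ a ∧ c ≤ b)
    (hiii : ∀ a b : L, ∃ c, b ≤ a + c)
    (ι : Type*) [Fintype ι]
    (M : ι → Type*) [∀ i, AddCommGroup (M i)]
    (F : ∀ i, L → AddSubgroup (M i))
    (hF : ∀ i, ∀ {a b : L}, a ≤ b → F i b ≤ F i a)
    (hexh : ∀ i (x : M i), ∃ l : L, x ∈ F i l)
    (G : ∀ i, Filter (M i))
    (hne : ∀ i, ∀ A ∈ G i, A.Nonempty)
    (hcauchy : ∀ i (lam : L), ∃ A ∈ G i, ∀ x ∈ A, ∀ y ∈ A, x - y ∈ F i lam) :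
    ∀ lam : L,
      ∃ S ∈ Filter.generate {S : Set (⨂[ℤ] i, M i) |
          ∃ A : ∀ i, Set (M i), (∀ i, A i ∈ G i) ∧
            S = (fun x : ∀ i, M i => PiTensorProduct.tprod ℤ x) '' Set.univ.pi A},
        ∀ x ∈ S, ∀ y ∈ S, x - y ∈ tensorFil L M F lam := by
  classical
  intro lam
  choose B hBG hB using fun i => hcauchy i lam
  choose a ha using fun i => hne i (B i) (hBG i)
  choose m hm using fun i => hexh i (a i)
  choose c hc1 hc2 using fun i => hdirop (m i) lam
  have hBF : ∀ i, ∀ x ∈ B i, x ∈ F i (c i) := by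
    intro i x hx
    have hx' : x = a i + (x - a i) := by abel
    rw [hx']
    exact add_mem (hF i (hc1 i) (hm i)) (hF i (hc2 i) (hB i x hx (a i) (ha i)))
  choose mu hmu using fun i => hiii (∑ j ∈ Finset.univ.erase i, c j) lam
  choose C hCG hC using fun i => hcauchy i (mu i)
  refine ⟨(fun x : ∀ i, M i => PiTensorProduct.tprod ℤ x) '' Set.univ.pi (fun i => B i ∩ C i),
    Filter.mem_generate_of_mem
      ⟨fun i => B i ∩ C i, fun i => Filter.inter_mem (hBG i) (hCG i), rfl⟩, ?_⟩
  rintro _ ⟨x, hx, rfl⟩ _ ⟨y, hy, rfl⟩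
  simp only [Set.mem_pi, Set.mem_univ, forall_true_left, Set.mem_inter_iff] at hx hy
  have key : ∀ s : Finset ι,
      PiTensorProduct.tprod ℤ (fun j => if j ∈ s then x j else y j)
        - PiTensorProduct.tprod ℤ y ∈ tensorFil L M F lam := by
    intro s
    induction s using Finset.induction with
    | empty => simpa using zero_mem (tensorFil L M F lam)
    | @insert i s hi ih =>
      set u : ∀ j, M j := fun j => if j ∈ s then x j else y j with hu
      have heq : (fun j => if j ∈ insert i s then x j else y j)
          = Function.update u i (x i) := by
        funext j
        by_cases h : j = i
        · subst h; simp [u, Function.update, hi]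
        · simp [u, Function.update, h]
      have heq2 : u = Function.update u i (y i) := by
        funext j
        by_cases h : j = i
        · subst h; simp [u, Function.update, hi]
        · simp [Function.update, h]
      have hterm : PiTensorProduct.tprod ℤ (Function.update u i (x i - y i))
          ∈ tensorFil L M F lam := by
        apply AddSubgroup.subset_closure
        refine ⟨fun j => if j = i then mu i else c j, Function.update u i (x i - y i),
          ?_, ?_, rfl⟩
        · have hsum : ∑ j, (fun j => if j = i then mu i else c j) j
              = mu i + ∑ j ∈ Finset.univ.erase i, c j := by
            rw [← Finset.add_sum_erase _ _ (Finset.mem_univ i)]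
            simp only [if_pos rfl]
            congr 1
            exact Finset.sum_congr rfl fun j hj => if_neg (Finset.ne_of_mem_erase hj)
          rw [hsum, add_comm]
          exact hmu i
        · intro j
          by_cases h : j = i
          · subst h
            simp only [Function.update_self, if_pos rfl]
            exact hC j (x j) (hx j).2 (y j) (hy j).2
          · simp only [Function.update_of_ne h, if_neg h]
            by_cases hj : j ∈ s
            · simpa [u, hj] using hBF j (x j) (hx j).1
            · simpa [u, hj] using hBF j (y j) (hy j).1
      have hsub : PiTensorProduct.tprod ℤ (Function.update u i (x i))
          - PiTensorProduct.tprod ℤ (Function.update u i (y i))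
          = PiTensorProduct.tprod ℤ (Function.update u i (x i - y i)) := by
        rw [MultilinearMap.map_update_sub]
      have : PiTensorProduct.tprod ℤ (fun j => if j ∈ insert i s then x j else y j)
          - PiTensorProduct.tprod ℤ y
          = PiTensorProduct.tprod ℤ (Function.update u i (x i - y i))
            + (PiTensorProduct.tprod ℤ u - PiTensorProduct.tprod ℤ y) := by
        rw [heq, ← hsub, ← heq2]
        abel
      rw [this]
      exact add_mem hterm ih
  have hx' : (fun j => if j ∈ (Finset.univ : Finset ι) then x j else y j) = x := by
    funext j; simp
  have := key Finset.univ
  rwa [hx'] at this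
end

section
/- Let c and d be conilpotent cocategories. Then their tensor product cocategory c ⊠ d (with objects Ob c × Ob d, comultiplication (Δ ⊠ Δ) followed by the middle four interchange, and componentwise counit and augmentation) is again conilpotent. Quantitatively: if Δ̄⁽ⁿ⁾ c = 0 and Δ̄⁽ᵐ⁾ d = 0 then Δ̄⁽ⁿ⁺ᵐ⁻¹⁾ (c ⊠ d) = 0, and Δ̄⁽ⁿ⁾ (c ⊠ η_U) = 0. -/
/-!
Write `π = id - η ε` and `ι = η ε` for the projections of a coalgebra onto its reduced and unit
parts. If `Δ̄⁽ⁿ⁾ a = 0`, then every map `(P₁ ⊗ ⋯ ⊗ Pₖ) ∘ Δ⁽ᵏ⁾` with each `Pᵢ ∈ {π, ι}` and at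
least `n` of them equal to `π` kills `a`, because it factors through `Δ̄⁽ⁿ⁾`. This is an induction
on `k`: an `ι` in the first slot only inserts the group-like element `η 1` (counit axiom), a `π` in
the first slot matches the first factor of `Δ̄⁽ⁿ⁾ = (π ⊗ Δ̄⁽ⁿ⁻¹⁾) ∘ Δ`, and when `n = 1` the map
kills `η 1`, hence factors through `π`.

On `c ⊠ d`, `Δ⁽ᵏ⁾` is the slotwise interleaving of `Δ⁽ᵏ⁾` on `c` and on `d`, and the reduced
projection is `π ⊗ π + π ⊗ ι + ι ⊗ π`. Expanding, `Δ̄⁽ᵏ⁾ (a ⊗ b)` is a sum of terms, each applying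
`π` in every slot on at least one side. For `k = n + m - 1` each term has `π` in at least `n` slots
on the `c` side or in at least `m` slots on the `d` side, so it vanishes. The statement about
`a ⊗ η_B 1` is the case `m = 1`, since `Δ̄⁽¹⁾ (η 1) = π (η 1) = 0`.
-/

open scoped TensorProduct

universe u

variable (Λ : Type u) [CommRing Λ]

/-- Iterated comultiplication `Δ⁽ⁿ⁾ : A → A^{⊗n}` of a coalgebra. -/
noncomputable def comulIter (A : Type u) [AddCommGroup A] [Module Λ A] [Coalgebra Λ A] :
    (n : ℕ) → (A →ₗ[Λ] ⨂[Λ] (_ : Fin n), A)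
  | 0 => (PiTensorProduct.isEmptyEquiv (Fin 0)).symm.toLinearMap ∘ₗ Coalgebra.counit
  | 1 => (PiTensorProduct.subsingletonEquiv (s := fun _ : Fin 1 => A) (0 : Fin 1)).symm.toLinearMap
  | (n+2) =>
      (PiTensorProduct.reindex Λ (fun _ : Fin 1 ⊕ Fin (n+1) => A)
          (finSumFinEquiv.trans (finCongr (by omega)))).toLinearMap ∘ₗ
        (PiTensorProduct.tmulEquiv Λ A).toLinearMap ∘ₗ
        (TensorProduct.map (PiTensorProduct.subsingletonEquiv (0 : Fin 1)).symm.toLinearMap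
          (comulIter A (n+1))) ∘ₗ
        Coalgebra.comul

/-- `π^{⊗n}` where `π = id - η ∘ ε` is the projection onto the reduced part; composing
with `Δ⁽ⁿ⁾` gives the iterated reduced comultiplication `Δ̄⁽ⁿ⁾` (on the reduced part). -/
noncomputable def redPow (A : Type u) [AddCommGroup A] [Module Λ A] [Coalgebra Λ A]
    (η : Λ →ₗ[Λ] A) (n : ℕ) :
    (⨂[Λ] (_ : Fin n), A) →ₗ[Λ] ⨂[Λ] (_ : Fin n), A :=
  PiTensorProduct.map (fun _ => LinearMap.id - η ∘ₗ Coalgebra.counit)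

/-- Conilpotency of an augmented coalgebra: every element is killed by some iterated
reduced comultiplication. -/
def IsConilpotent (A : Type u) [AddCommGroup A] [Module Λ A] [Coalgebra Λ A]
    (η : Λ →ₗ[Λ] A) : Prop :=
  ∀ x : A, ∃ n : ℕ, 1 < n ∧ redPow Λ A η n (comulIter Λ A n x) = 0

open PiTensorProduct
open scoped Finset

section

variable {Λ}

theorem card_le_card_filter_add_card_filter {ι : Type*} [Fintype ι] {p q : ι → Prop}
    [DecidablePred p] [DecidablePred q] (h : ∀ i, p i ∨ q i) :
    Fintype.card ι ≤ #{i | p i} + #{i | q i} := by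
  classical
  calc Fintype.card ι = #(({i | p i} : Finset ι) ∪ ({i | q i} : Finset ι)) := by
        rw [← Finset.filter_or, Finset.filter_true_of_mem fun i _ => h i, Finset.card_univ]
    _ ≤ _ := Finset.card_union_le _ _

section TensorPower

variable {M N M' N' : Type*} [AddCommMonoid M] [Module Λ M] [AddCommMonoid N] [Module Λ N]
  [AddCommMonoid M'] [Module Λ M'] [AddCommMonoid N'] [Module Λ N']

variable (Λ M) in
noncomputable def tensorPowConsEquiv (m : ℕ) :
    M ⊗[Λ] (⨂[Λ] (_ : Fin m), M) ≃ₗ[Λ] ⨂[Λ] (_ : Fin (m + 1)), M :=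
  TensorProduct.congr (subsingletonEquiv (s := fun _ : Fin 1 => M) 0).symm
      (LinearEquiv.refl Λ _) ≪≫ₗ
    tmulEquiv Λ M ≪≫ₗ reindex Λ (fun _ => M) (finSumFinEquiv.trans (finCongr (Nat.add_comm 1 m)))

theorem tensorPowConsEquiv_tmul_tprod {m : ℕ} (v : M) (b : Fin m → M) :
    tensorPowConsEquiv Λ M m (v ⊗ₜ PiTensorProduct.tprod Λ b) =
      PiTensorProduct.tprod Λ (Fin.cons v b) := by
  simp only [tensorPowConsEquiv, LinearEquiv.trans_apply, TensorProduct.congr_tmul,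
    subsingletonEquiv_symm_apply, LinearEquiv.refl_apply, tmulEquiv_apply, reindex_tprod]
  congr 1
  ext i
  refine Fin.cases rfl (fun j => ?_) i
  have : (finSumFinEquiv.trans (finCongr (Nat.add_comm 1 m))).symm j.succ = Sum.inr j := by
    rw [Equiv.symm_apply_eq]; ext; simp
  rw [this]
  rfl

theorem map_comp_tensorPowConsEquiv {m : ℕ} (g : Fin (m + 1) → M →ₗ[Λ] N) :
    map g ∘ₗ (tensorPowConsEquiv Λ M m).toLinearMap =
      (tensorPowConsEquiv Λ N m).toLinearMap ∘ₗ
        TensorProduct.map (g 0) (map fun i => g i.succ) := by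
  ext v b
  simp only [TensorProduct.AlgebraTensorModule.curry_apply, LinearMap.restrictScalars_self,
    LinearMap.compMultilinearMap_apply, TensorProduct.curry_apply, LinearMap.coe_comp,
    LinearEquiv.coe_coe, Function.comp_apply, tensorPowConsEquiv_tmul_tprod, map_tprod,
    TensorProduct.map_tmul]
  congr 1
  ext i
  exact Fin.cases rfl (fun _ => rfl) i

variable (Λ M N) in
noncomputable def tensorPowShuffle (ι : Type*) :
    (⨂[Λ] (_ : ι), M) ⊗[Λ] (⨂[Λ] (_ : ι), N) →ₗ[Λ] ⨂[Λ] (_ : ι), M ⊗[Λ] N :=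
  TensorProduct.lift <| PiTensorProduct.lift <|
    (mapMultilinear Λ (fun _ => N) (fun _ => M ⊗[Λ] N)).compLinearMap
      fun _ => TensorProduct.mk Λ M N

@[simp]
theorem tensorPowShuffle_tprod_tmul_tprod {ι : Type*} (a : ι → M) (b : ι → N) :
    tensorPowShuffle Λ M N ι (PiTensorProduct.tprod Λ a ⊗ₜ PiTensorProduct.tprod Λ b) =
      PiTensorProduct.tprod Λ fun i => a i ⊗ₜ b i := by
  simp [tensorPowShuffle]

theorem map_comp_tensorPowShuffle {ι : Type*} (g : ι → M →ₗ[Λ] M') (h : ι → N →ₗ[Λ] N') :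
    map (fun i => TensorProduct.map (g i) (h i)) ∘ₗ tensorPowShuffle Λ M N ι =
      tensorPowShuffle Λ M' N' ι ∘ₗ TensorProduct.map (map g) (map h) := by
  ext a b
  simp

theorem tensorPowShuffle_cons {m : ℕ} (x : M) (y : N) (p : ⨂[Λ] (_ : Fin m), M)
    (q : ⨂[Λ] (_ : Fin m), N) :
    tensorPowShuffle Λ M N (Fin (m + 1))
        (tensorPowConsEquiv Λ M m (x ⊗ₜ p) ⊗ₜ tensorPowConsEquiv Λ N m (y ⊗ₜ q)) =
      tensorPowConsEquiv Λ (M ⊗[Λ] N) m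
        ((x ⊗ₜ y) ⊗ₜ tensorPowShuffle Λ M N (Fin m) (p ⊗ₜ q)) := by
  have key : tensorPowShuffle Λ M N (Fin (m + 1)) ∘ₗ
      TensorProduct.map (tensorPowConsEquiv Λ M m).toLinearMap
        (tensorPowConsEquiv Λ N m).toLinearMap =
      (tensorPowConsEquiv Λ (M ⊗[Λ] N) m).toLinearMap ∘ₗ
        (tensorPowShuffle Λ M N (Fin m)).lTensor (M ⊗[Λ] N) ∘ₗ
        (TensorProduct.tensorTensorTensorComm Λ M _ N _).toLinearMap := by
    ext x b y c
    simp only [TensorProduct.AlgebraTensorModule.curry_apply, LinearMap.restrictScalars_self,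
      LinearMap.compMultilinearMap_apply, TensorProduct.curry_apply, LinearMap.coe_comp,
      Function.comp_apply, TensorProduct.map_tmul, LinearEquiv.coe_coe,
      tensorPowConsEquiv_tmul_tprod, tensorPowShuffle_tprod_tmul_tprod,
      TensorProduct.tensorTensorTensorComm_tmul, LinearMap.lTensor_tmul]
    congr 1
    ext i
    exact Fin.cases rfl (fun _ => rfl) i
  simpa using congr($key ((x ⊗ₜ p) ⊗ₜ (y ⊗ₜ q)))

end TensorPower

section IteratedComul

variable {A : Type u} [AddCommGroup A] [Module Λ A] [Coalgebra Λ A]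

theorem comulIter_succ (m : ℕ) :
    comulIter Λ A (m + 1) =
      (tensorPowConsEquiv Λ A m).toLinearMap ∘ₗ (comulIter Λ A m).lTensor A ∘ₗ
        Coalgebra.comul := by
  rcases m with _ | m
  · ext x
    have hε : (comulIter Λ A 0).lTensor A (Coalgebra.comul x) =
        x ⊗ₜ PiTensorProduct.tprod Λ (fun i : Fin 0 => i.elim0) := by
      rw [comulIter, LinearMap.lTensor_comp, LinearMap.comp_apply,
        Coalgebra.lTensor_counit_comul]
      simp only [LinearMap.lTensor_tmul, LinearEquiv.coe_coe, isEmptyEquiv_symm_apply, one_smul]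
      congr 2
    rw [LinearMap.comp_apply, LinearMap.comp_apply, hε, LinearEquiv.coe_coe,
      tensorPowConsEquiv_tmul_tprod]
    simp only [comulIter, LinearEquiv.coe_coe, subsingletonEquiv_symm_apply]
    congr 1
    ext i
    exact Fin.cases rfl (fun j => j.elim0) i
  · rw [comulIter]
    simp only [← LinearMap.comp_assoc]
    congr 1
    exact TensorProduct.ext' fun _ _ => rfl

theorem comulIter_eq_tprod_of_isGroupLikeElem {g : A} (hg : IsGroupLikeElem Λ g) (m : ℕ) :
    comulIter Λ A m g = PiTensorProduct.tprod Λ fun _ => g := by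
  induction m with
  | zero =>
    simp only [comulIter, LinearMap.comp_apply, LinearEquiv.coe_coe, hg.counit_eq_one,
      isEmptyEquiv_symm_apply, one_smul]
    congr 1
    ext i
    exact i.elim0
  | succ m ih =>
    rw [comulIter_succ]
    simp only [LinearMap.comp_apply, hg.comul_eq_tmul_self, LinearMap.lTensor_tmul, ih,
      LinearEquiv.coe_coe, tensorPowConsEquiv_tmul_tprod]
    congr 1
    ext i
    exact Fin.cases rfl (fun _ => rfl) i

end IteratedComul

section Reduced

variable {A : Type u} [AddCommGroup A] [Module Λ A] [Coalgebra Λ A] (η : Λ →ₗ[Λ] A)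

noncomputable def augProj : Bool → A →ₗ[Λ] A
  | true => LinearMap.id - η ∘ₗ Coalgebra.counit
  | false => η ∘ₗ Coalgebra.counit

variable {η}

theorem augProj_true_apply_eta_eq_zero (h : Coalgebra.counit (R := Λ) (η 1) = 1) :
    augProj η true (η 1) = 0 := by
  simp [augProj, h]

theorem comp_augProj_true_of_apply_eta_eq_zero {P : Type*} [AddCommGroup P] [Module Λ P]
    {X : A →ₗ[Λ] P} (hX : X (η 1) = 0) : X ∘ₗ augProj η true = X := by
  ext x
  have hηε : X (η (Coalgebra.counit x)) = 0 := by
    rw [← mul_one (Coalgebra.counit x), ← smul_eq_mul, map_smul, map_smul, hX, smul_zero]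
  simp [augProj, hηε]

theorem map_eta_counit_comp_comul {P : Type*} [AddCommMonoid P] [Module Λ P] (Y : A →ₗ[Λ] P) :
    TensorProduct.map (η ∘ₗ Coalgebra.counit) Y ∘ₗ Coalgebra.comul =
      TensorProduct.mk Λ A P (η 1) ∘ₗ Y := by
  ext x
  rw [LinearMap.comp_apply, ← LinearMap.map_rTensor, Coalgebra.rTensor_counit_comul]
  rfl

variable (η) in
noncomputable def projComulIter {k : ℕ} (f : Fin k → Bool) : A →ₗ[Λ] ⨂[Λ] (_ : Fin k), A :=
  PiTensorProduct.map (fun i => augProj η (f i)) ∘ₗ comulIter Λ A k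

theorem redPow_comp_comulIter (n : ℕ) :
    redPow Λ A η n ∘ₗ comulIter Λ A n = projComulIter η fun _ : Fin n => true :=
  rfl

theorem projComulIter_succ {k : ℕ} (f : Fin (k + 1) → Bool) :
    projComulIter η f =
      (tensorPowConsEquiv Λ A k).toLinearMap ∘ₗ
        TensorProduct.map (augProj η (f 0)) (projComulIter η (Fin.tail f)) ∘ₗ
          Coalgebra.comul := by
  rw [projComulIter, comulIter_succ, ← LinearMap.comp_assoc, map_comp_tensorPowConsEquiv,
    LinearMap.comp_assoc, ← LinearMap.comp_assoc _ _ (TensorProduct.map _ _),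
    LinearMap.map_comp_lTensor]
  rfl

theorem projComulIter_apply_eta_eq_zero (hη : IsGroupLikeElem Λ (η 1)) {k : ℕ}
    {f : Fin k → Bool} {i : Fin k} (hi : f i = true) : projComulIter η f (η 1) = 0 := by
  rw [projComulIter, LinearMap.comp_apply, comulIter_eq_tprod_of_isGroupLikeElem hη, map_tprod]
  refine MultilinearMap.map_coord_zero _ i ?_
  rw [hi, augProj_true_apply_eta_eq_zero hη.counit_eq_one]

theorem projComulIter_fin_one_true :
    projComulIter η (fun _ : Fin 1 => true) =
      (subsingletonEquiv (s := fun _ : Fin 1 => A) 0).symm.toLinearMap ∘ₗ augProj η true := by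
  ext x
  simp [projComulIter, comulIter]

theorem exists_projComulIter_eq_comp (hη : IsGroupLikeElem Λ (η 1)) {k n : ℕ}
    (f : Fin k → Bool) (hn : 1 ≤ n) (hf : n ≤ #{i | f i = true}) :
    ∃ J : (⨂[Λ] (_ : Fin n), A) →ₗ[Λ] ⨂[Λ] (_ : Fin k), A,
      projComulIter η f = J ∘ₗ projComulIter η fun _ : Fin n => true := by
  induction k generalizing n with
  | zero =>
    have := hf.trans (Finset.card_le_univ _)
    rw [Fintype.card_fin] at this
    omega
  | succ k ih =>
    obtain _ | _ | n := n
    · omega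
    · obtain ⟨i, hi⟩ := Finset.card_pos.mp (lt_of_lt_of_le hn hf)
      have hX := projComulIter_apply_eta_eq_zero hη (Finset.mem_filter.mp hi).2
      refine ⟨projComulIter η f ∘ₗ (subsingletonEquiv (s := fun _ : Fin 1 => A) 0).toLinearMap,
        ?_⟩
      rw [projComulIter_fin_one_true, LinearMap.comp_assoc, LinearEquiv.comp_symm_assoc,
        comp_augProj_true_of_apply_eta_eq_zero hX]
    · rw [Fin.card_filter_univ_succ] at hf
      rw [projComulIter_succ]
      cases h0 : f 0
      · simp only [h0] at hf
        obtain ⟨J, hJ⟩ := ih (Fin.tail f) hn hf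
        refine ⟨(tensorPowConsEquiv Λ A k).toLinearMap ∘ₗ TensorProduct.mk Λ A _ (η 1) ∘ₗ J, ?_⟩
        rw [hJ, augProj, map_eta_counit_comp_comul]
        rfl
      · simp only [h0, if_true] at hf
        obtain ⟨J, hJ⟩ := ih (Fin.tail f) (n := n + 1) (by omega) (by unfold Fin.tail; omega)
        refine ⟨(tensorPowConsEquiv Λ A k).toLinearMap ∘ₗ J.lTensor A ∘ₗ
          (tensorPowConsEquiv Λ A (n + 1)).symm.toLinearMap, ?_⟩
        rw [projComulIter_succ (fun _ => true), hJ, ← LinearMap.lTensor_comp_map]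
        simp only [LinearMap.comp_assoc, LinearEquiv.symm_comp_assoc]
        rfl

theorem projComulIter_apply_eq_zero (hη : IsGroupLikeElem Λ (η 1)) {k n : ℕ}
    {f : Fin k → Bool} (hn : 1 ≤ n) (hf : n ≤ #{i | f i = true}) {a : A}
    (ha : redPow Λ A η n (comulIter Λ A n a) = 0) : projComulIter η f a = 0 := by
  obtain ⟨J, hJ⟩ := exists_projComulIter_eq_comp hη f hn hf
  rw [hJ, LinearMap.comp_apply, ← redPow_comp_comulIter, LinearMap.comp_apply, ha, map_zero]

theorem redPow_comulIter_eq_zero_of_le (hη : IsGroupLikeElem Λ (η 1)) {n k : ℕ} (hn : 1 ≤ n)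
    (hnk : n ≤ k) {a : A} (ha : redPow Λ A η n (comulIter Λ A n a) = 0) :
    redPow Λ A η k (comulIter Λ A k a) = 0 := by
  rw [← LinearMap.comp_apply, redPow_comp_comulIter]
  exact projComulIter_apply_eq_zero hη hn (by simpa using hnk) ha

theorem redPow_comulIter_eta_eq_zero (hη : IsGroupLikeElem Λ (η 1)) {n : ℕ} (hn : 1 ≤ n) :
    redPow Λ A η n (comulIter Λ A n (η 1)) = 0 := by
  rw [← LinearMap.comp_apply, redPow_comp_comulIter]
  exact projComulIter_apply_eta_eq_zero hη (i := ⟨0, hn⟩) rfl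

end Reduced

section TensorProduct

variable {A B : Type u} [AddCommGroup A] [Module Λ A] [AddCommGroup B] [Module Λ B]

section Aug

variable (ηA : Λ →ₗ[Λ] A) (ηB : Λ →ₗ[Λ] B)

noncomputable def tensorAug : Λ →ₗ[Λ] A ⊗[Λ] B :=
  TensorProduct.map ηA ηB ∘ₗ (TensorProduct.lid Λ Λ).symm.toLinearMap

theorem tensorAug_one : tensorAug ηA ηB 1 = ηA 1 ⊗ₜ ηB 1 := by
  simp [tensorAug]

end Aug

variable [Coalgebra Λ A] [Coalgebra Λ B]

theorem IsGroupLikeElem.tmul {a : A} {b : B} (ha : IsGroupLikeElem Λ a)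
    (hb : IsGroupLikeElem Λ b) : IsGroupLikeElem Λ (a ⊗ₜ[Λ] b) where
  counit_eq_one := by simp [ha.counit_eq_one, hb.counit_eq_one]
  comul_eq_tmul_self := by simp [ha.comul_eq_tmul_self, hb.comul_eq_tmul_self]

theorem comulIter_tensorProduct (k : ℕ) :
    comulIter Λ (A ⊗[Λ] B) k =
      tensorPowShuffle Λ A B (Fin k) ∘ₗ
        TensorProduct.map (comulIter Λ A k) (comulIter Λ B k) := by
  induction k with
  | zero =>
    ext a b
    simp only [comulIter, TensorProduct.AlgebraTensorModule.curry_apply,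
      LinearMap.restrictScalars_self, TensorProduct.curry_apply, LinearMap.coe_comp,
      LinearEquiv.coe_coe, Function.comp_apply, TensorProduct.counit_tmul, smul_eq_mul,
      isEmptyEquiv_symm_apply, TensorProduct.map_tmul, TensorProduct.tmul_smul,
      ← TensorProduct.smul_tmul', smul_smul, map_smul, tensorPowShuffle_tprod_tmul_tprod]
    congr 2
    exact Subsingleton.elim _ _
  | succ k ih =>
    have key : (tensorPowConsEquiv Λ (A ⊗[Λ] B) k).toLinearMap ∘ₗ
        (comulIter Λ (A ⊗[Λ] B) k).lTensor _ ∘ₗ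
        (TensorProduct.tensorTensorTensorComm Λ A A B B).toLinearMap =
        tensorPowShuffle Λ A B (Fin (k + 1)) ∘ₗ
          TensorProduct.map
            ((tensorPowConsEquiv Λ A k).toLinearMap ∘ₗ (comulIter Λ A k).lTensor A)
            ((tensorPowConsEquiv Λ B k).toLinearMap ∘ₗ (comulIter Λ B k).lTensor B) := by
      ext x₁ x₂ y₁ y₂
      simp [ih, tensorPowShuffle_cons]
    calc comulIter Λ (A ⊗[Λ] B) (k + 1)
        = ((tensorPowConsEquiv Λ (A ⊗[Λ] B) k).toLinearMap ∘ₗ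
            (comulIter Λ (A ⊗[Λ] B) k).lTensor _ ∘ₗ
            (TensorProduct.tensorTensorTensorComm Λ A A B B).toLinearMap) ∘ₗ
          TensorProduct.map Coalgebra.comul Coalgebra.comul := by
          rw [comulIter_succ]; rfl
      _ = _ := by
        rw [key, comulIter_succ, comulIter_succ, LinearMap.comp_assoc, ← TensorProduct.map_comp]
        rfl

variable (ηA : Λ →ₗ[Λ] A) (ηB : Λ →ₗ[Λ] B)

theorem augProj_tensorAug_true :
    augProj (tensorAug ηA ηB) true =
      ∑ s : Bool × Bool with s.1 = true ∨ s.2 = true,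
        TensorProduct.map (augProj ηA s.1) (augProj ηB s.2) := by
  have hεη (x : A) (y : B) :
      ηA 1 ⊗ₜ[Λ] ηB (Coalgebra.counit y * Coalgebra.counit x) =
        ηA (Coalgebra.counit x) ⊗ₜ ηB (Coalgebra.counit y) := by
    rw [mul_comm, ← smul_eq_mul, map_smul, TensorProduct.tmul_smul, TensorProduct.smul_tmul',
      ← map_smul, smul_eq_mul, mul_one]
  ext x y
  simp [augProj, tensorAug, Finset.sum_filter, Fintype.sum_prod_type, hεη,
    TensorProduct.tmul_sub, TensorProduct.sub_tmul]

theorem redPow_tensorAug (k : ℕ) :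
    redPow Λ (A ⊗[Λ] B) (tensorAug ηA ηB) k =
      ∑ r ∈ Fintype.piFinset fun _ : Fin k => {s : Bool × Bool | s.1 = true ∨ s.2 = true},
        map fun i => TensorProduct.map (augProj ηA (r i).1) (augProj ηB (r i).2) := by
  have hsum : redPow Λ (A ⊗[Λ] B) (tensorAug ηA ηB) k =
      mapMultilinear Λ _ _ fun _ : Fin k => ∑ s : Bool × Bool with s.1 = true ∨ s.2 = true,
        TensorProduct.map (augProj ηA s.1) (augProj ηB s.2) := by
    rw [← augProj_tensorAug_true]
    rfl
  rw [hsum, MultilinearMap.map_sum_finset]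
  rfl

theorem redPow_comulIter_tmul (k : ℕ) (a : A) (b : B) :
    redPow Λ (A ⊗[Λ] B) (tensorAug ηA ηB) k (comulIter Λ (A ⊗[Λ] B) k (a ⊗ₜ b)) =
      ∑ r ∈ Fintype.piFinset fun _ => {s : Bool × Bool | s.1 = true ∨ s.2 = true},
        tensorPowShuffle Λ A B (Fin k)
          (projComulIter ηA (fun i => (r i).1) a ⊗ₜ projComulIter ηB (fun i => (r i).2) b) := by
  rw [comulIter_tensorProduct, redPow_tensorAug, LinearMap.sum_apply]
  refine Finset.sum_congr rfl fun r _ => ?_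
  exact congr($(map_comp_tensorPowShuffle _ _) (comulIter Λ A k a ⊗ₜ comulIter Λ B k b))

variable {ηA ηB}

theorem redPow_comulIter_tmul_eq_zero (hA : IsGroupLikeElem Λ (ηA 1))
    (hB : IsGroupLikeElem Λ (ηB 1)) {n m : ℕ} (hn : 1 ≤ n) (hm : 1 ≤ m) {a : A} {b : B}
    (ha : redPow Λ A ηA n (comulIter Λ A n a) = 0)
    (hb : redPow Λ B ηB m (comulIter Λ B m b) = 0) :
    redPow Λ (A ⊗[Λ] B) (tensorAug ηA ηB) (n + m - 1)
      (comulIter Λ (A ⊗[Λ] B) (n + m - 1) (a ⊗ₜ b)) = 0 := by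
  rw [redPow_comulIter_tmul]
  refine Finset.sum_eq_zero fun r hr => ?_
  have hcover := card_le_card_filter_add_card_filter (by simpa using hr)
  rw [Fintype.card_fin] at hcover
  obtain hr₁ | hr₂ : n ≤ #{i | (r i).1 = true} ∨ m ≤ #{i | (r i).2 = true} := by omega
  · rw [projComulIter_apply_eq_zero hA hn hr₁ ha, TensorProduct.zero_tmul, map_zero]
  · rw [projComulIter_apply_eq_zero hB hm hr₂ hb, TensorProduct.tmul_zero, map_zero]

theorem IsConilpotent.tensorProduct (hA : IsGroupLikeElem Λ (ηA 1))
    (hB : IsGroupLikeElem Λ (ηB 1)) (hAc : IsConilpotent Λ A ηA) (hBc : IsConilpotent Λ B ηB) :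
    IsConilpotent Λ (A ⊗[Λ] B) (tensorAug ηA ηB) := by
  have hC : IsGroupLikeElem Λ (tensorAug ηA ηB 1) := tensorAug_one ηA ηB ▸ hA.tmul hB
  intro x
  induction x using TensorProduct.induction_on with
  | zero => exact ⟨2, by omega, by simp⟩
  | tmul a b =>
    obtain ⟨n, hn, ha⟩ := hAc a
    obtain ⟨m, hm, hb⟩ := hBc b
    exact ⟨n + m - 1, by omega, redPow_comulIter_tmul_eq_zero hA hB (by omega) (by omega) ha hb⟩
  | add x y hx hy =>
    obtain ⟨n, hn, hx⟩ := hx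
    obtain ⟨m, hm, hy⟩ := hy
    refine ⟨max n m, by omega, ?_⟩
    rw [map_add, map_add, redPow_comulIter_eq_zero_of_le hC (by omega) (le_max_left n m) hx,
      redPow_comulIter_eq_zero_of_le hC (by omega) (le_max_right n m) hy, add_zero]

end TensorProduct

end

/-- the tensor product `A ⊗ B` of conilpotent cocategories (with
comultiplication `(Δ ⊗ Δ)` followed by the middle four interchange — the standard
tensor-product coalgebra structure — and augmentation `η_A ⊗ η_B`) is conilpotent.
Quantitatively, if `Δ̄⁽ⁿ⁾ a = 0` and `Δ̄⁽ᵐ⁾ b = 0` then `Δ̄⁽ⁿ⁺ᵐ⁻¹⁾(a ⊗ b) = 0`,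
and `Δ̄⁽ⁿ⁾(a ⊗ η_B 1) = 0`. -/
theorem stmt15 {A B : Type u}
    [AddCommGroup A] [Module Λ A] [Coalgebra Λ A]
    [AddCommGroup B] [Module Λ B] [Coalgebra Λ B]
    (ηA : Λ →ₗ[Λ] A) (ηB : Λ →ₗ[Λ] B)
    (hηAcomul : Coalgebra.comul (ηA 1) = ηA 1 ⊗ₜ[Λ] ηA 1)
    (hηAcounit : Coalgebra.counit (ηA 1) = (1 : Λ))
    (hηBcomul : Coalgebra.comul (ηB 1) = ηB 1 ⊗ₜ[Λ] ηB 1)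
    (hηBcounit : Coalgebra.counit (ηB 1) = (1 : Λ)) :
    let ηC : Λ →ₗ[Λ] A ⊗[Λ] B :=
      TensorProduct.map ηA ηB ∘ₗ (TensorProduct.lid Λ Λ).symm.toLinearMap
    (IsConilpotent Λ A ηA → IsConilpotent Λ B ηB → IsConilpotent Λ (A ⊗[Λ] B) ηC) ∧
    (∀ (a : A) (bb : B) (n m : ℕ), 1 ≤ n → 1 ≤ m →
      redPow Λ A ηA n (comulIter Λ A n a) = 0 →
      redPow Λ B ηB m (comulIter Λ B m bb) = 0 →
      redPow Λ (A ⊗[Λ] B) ηC (n + m - 1)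
        (comulIter Λ (A ⊗[Λ] B) (n + m - 1) (a ⊗ₜ[Λ] bb)) = 0) ∧
    (∀ (a : A) (n : ℕ), 1 ≤ n →
      redPow Λ A ηA n (comulIter Λ A n a) = 0 →
      redPow Λ (A ⊗[Λ] B) ηC n (comulIter Λ (A ⊗[Λ] B) n (a ⊗ₜ[Λ] ηB 1)) = 0) := by
  intro ηC
  have hA : IsGroupLikeElem Λ (ηA 1) := ⟨hηAcounit, hηAcomul⟩
  have hB : IsGroupLikeElem Λ (ηB 1) := ⟨hηBcounit, hηBcomul⟩
  refine ⟨IsConilpotent.tensorProduct hA hB, fun a b n m hn hm ha hb =>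
    redPow_comulIter_tmul_eq_zero hA hB hn hm ha hb, fun a n hn ha => ?_⟩
  have h := redPow_comulIter_tmul_eq_zero hA hB hn le_rfl ha
    (redPow_comulIter_eta_eq_zero hB le_rfl)
  rwa [Nat.add_sub_cancel] at h
end
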